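/- arXiv:0805.1574 — 2 statements merged into one kernel-verified Lean document; each statement's English description precedes it below -/
import Mathlib

section
/- Let q be an odd prime power, F a finite field with |F| = q, and n ≥ 1. Then the 2-rank of the general linear group GL_n(F) equals n, i.e. r_2(GL_n(F)) = n. -/
/-- A subgroup `H` is elementary abelian for the prime `p` if it is abelian and every
element `x ∈ H` satisfies `x ^ p = 1`. -/
def IsElementaryAbelian (p : ℕ) {G : Type*} [Group G] (H : Subgroup G) : Prop :=
  (∀ x ∈ H, ∀ y ∈ H, x * y = y * x) ∧ ∀ x ∈ H, x ^ p = 1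

/-- `r_p(G)`: the maximal rank (`log_p` of the order) of an elementary abelian
`p`-subgroup of `G`. -/
noncomputable def pRank (p : ℕ) (G : Type*) [Group G] : ℕ :=
  sSup {n | ∃ H : Subgroup G, IsElementaryAbelian p H ∧ Nat.card H = p ^ n}

/-- `nr_p(G)`: the maximal rank of a normal elementary abelian `p`-subgroup of `G`. -/
noncomputable def pNormalRank (p : ℕ) (G : Type*) [Group G] : ℕ :=
  sSup {n | ∃ H : Subgroup G, H.Normal ∧ IsElementaryAbelian p H ∧ Nat.card H = p ^ n}

/-! An elementary abelian 2-subgroup `E` of `GL(V)`, in characteristic `≠ 2`, has order at most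
`2 ^ dim V`: if some `g ∈ E` is not `±1`, then `V` splits into the `±1`-eigenspaces of `g`, both
proper and `E`-invariant because `E` is abelian, and `E` acts faithfully on their sum, so induction
on the dimension applies. The diagonal `±1` matrices give an elementary abelian subgroup of order
`2 ^ n`; it lies in some Sylow 2-subgroup, and all Sylow 2-subgroups are isomorphic. -/

open Module

namespace Module.End

variable {F V : Type*} [Field F] [AddCommGroup V] [Module F V]

theorem isCompl_eigenspace_one_neg_one {f : End F V} (hf : f * f = 1) (h2 : (2 : F) ≠ 0) :
    IsCompl (f.eigenspace 1) (f.eigenspace (-1)) := by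
  have hff (v : V) : f (f v) = v := LinearMap.congr_fun hf v
  constructor
  · rw [Submodule.disjoint_def]
    intro v h₁ h₂
    rw [mem_eigenspace_iff, one_smul] at h₁
    rw [mem_eigenspace_iff, neg_one_smul] at h₂
    have : (2 : F) • v = 0 := by
      rw [two_smul]; nth_rewrite 1 [← h₁]; rw [h₂, neg_add_cancel]
    exact (smul_eq_zero.1 this).resolve_left h2
  · rw [codisjoint_iff_le_sup]
    intro v _
    refine Submodule.mem_sup.2
      ⟨(2 : F)⁻¹ • (v + f v), ?_, (2 : F)⁻¹ • (v - f v), ?_, ?_⟩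
    · simp [hff, add_comm]
    · simp [hff, ← smul_neg]
    · rw [← smul_add, add_add_sub_cancel, ← two_smul F, smul_smul, inv_mul_cancel₀ h2,
        one_smul]

theorem finrank_eigenspace_lt [FiniteDimensional F V] {f : End F V} {μ : F} (hf : f ≠ μ • 1) :
    finrank F (f.eigenspace μ) < finrank F V := by
  refine Submodule.finrank_lt fun htop ↦ hf (LinearMap.ext fun v ↦ ?_)
  simpa using mem_eigenspace_iff.1 (htop ▸ Submodule.mem_top : v ∈ f.eigenspace μ)

end Module.End

namespace Representation

variable {F G V : Type*} [Field F] [Group G] [AddCommGroup V] [Module F V]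

theorem le_comap_eigenspace_of_commute (ρ : Representation F G V) {f : End F V}
    (hf : ∀ g, Commute f (ρ g)) (μ : F) (g : G) :
    f.eigenspace μ ≤ (f.eigenspace μ).comap (ρ g) :=
  fun _ hv ↦ End.mapsTo_genEigenspace_of_comm (hf g) μ 1 hv

theorem index_ker_le_mul_of_isCompl [Finite G] (ρ : Representation F G V)
    {W₁ W₂ : Submodule F V} (hW : IsCompl W₁ W₂) (h₁ : ∀ g, W₁ ≤ W₁.comap (ρ g))
    (h₂ : ∀ g, W₂ ≤ W₂.comap (ρ g)) :
    ρ.ker.index ≤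
      (ρ.subrepresentation W₁ h₁).ker.index * (ρ.subrepresentation W₂ h₂).ker.index := by
  refine (Subgroup.index_antitone fun g hg ↦ ?_).trans Subgroup.index_inf_le
  obtain ⟨hg₁, hg₂⟩ := Subgroup.mem_inf.1 hg
  rw [MonoidHom.mem_ker] at hg₁ hg₂ ⊢
  refine LinearMap.ext fun v ↦ ?_
  obtain ⟨w₁, hw₁, w₂, hw₂, rfl⟩ :=
    Submodule.mem_sup.1 (hW.sup_eq_top ▸ Submodule.mem_top (x := v))
  have e₁ := congr_arg Subtype.val (LinearMap.congr_fun hg₁ ⟨w₁, hw₁⟩)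
  have e₂ := congr_arg Subtype.val (LinearMap.congr_fun hg₂ ⟨w₂, hw₂⟩)
  simp only [subrepresentation_apply, LinearMap.coe_restrict_apply, End.one_apply] at e₁ e₂
  simp [e₁, e₂]

theorem index_ker_le_two_of_forall_eq_one_or_eq_neg_one (ρ : Representation F G V)
    (hρ : ∀ g, ρ g = 1 ∨ ρ g = -1) : ρ.ker.index ≤ 2 := by
  rw [← MonoidHom.ker_toHomUnits, Subgroup.index_ker]
  calc Nat.card ρ.toHomUnits.range ≤ ({1, -1} : Set (End F V)ˣ).ncard := by
        refine Set.ncard_le_ncard ?_ (Set.toFinite _)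
        rintro _ ⟨g, rfl⟩
        rcases hρ g with h | h <;> simp [Units.ext_iff, h]
    _ ≤ 2 := (Set.ncard_insert_le _ _).trans (by simp)

theorem index_ker_le_two_pow [Finite G] (h2 : (2 : F) ≠ 0) (hG : ∀ g : G, g ^ 2 = 1)
    [FiniteDimensional F V] (ρ : Representation F G V) : ρ.ker.index ≤ 2 ^ finrank F V := by
  induction hn : finrank F V using Nat.strong_induction_on generalizing V with
  | _ n ih =>
  rcases Nat.eq_zero_or_pos n with rfl | hn0
  · have : Subsingleton V := Module.finrank_zero_iff.1 hn
    rw [← MonoidHom.ker_toHomUnits, Subgroup.index_ker, pow_zero]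
    exact Finite.card_le_one_iff_subsingleton.2 inferInstance
  by_cases hsign : ∀ g, ρ g = 1 ∨ ρ g = -1
  · exact (ρ.index_ker_le_two_of_forall_eq_one_or_eq_neg_one hsign).trans
      (Nat.le_self_pow hn0.ne' 2)
  push Not at hsign
  obtain ⟨g, hg_one, hg_neg⟩ := hsign
  have hρg : ρ g * ρ g = 1 := by rw [← map_mul, ← sq, hG, map_one]
  have hcomm (h : G) : Commute (ρ g) (ρ h) :=
    (Commute.of_orderOf_dvd_two (fun x ↦ orderOf_dvd_of_pow_eq_one (hG x)) g h).map ρ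
  have h_pos := ρ.le_comap_eigenspace_of_commute hcomm 1
  have h_neg := ρ.le_comap_eigenspace_of_commute hcomm (-1)
  have hcompl := End.isCompl_eigenspace_one_neg_one hρg h2
  calc ρ.ker.index
      ≤ (ρ.subrepresentation _ h_pos).ker.index * (ρ.subrepresentation _ h_neg).ker.index :=
        ρ.index_ker_le_mul_of_isCompl hcompl h_pos h_neg
    _ ≤ 2 ^ finrank F (End.eigenspace (ρ g) 1) * 2 ^ finrank F (End.eigenspace (ρ g) (-1)) := by
        gcongr
        · exact ih _ (hn ▸ End.finrank_eigenspace_lt (μ := 1) (by rwa [one_smul])) _ rfl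
        · exact ih _ (hn ▸ End.finrank_eigenspace_lt (μ := -1) (by rwa [neg_one_smul])) _ rfl
    _ = 2 ^ n := by rw [← pow_add, Submodule.finrank_add_eq_of_isCompl hcompl, hn]

end Representation

namespace IsElementaryAbelian

variable {p : ℕ} {G G' : Type*} [Group G] [Group G']

theorem map {H : Subgroup G} (hH : IsElementaryAbelian p H) (φ : G →* G') :
    IsElementaryAbelian p (H.map φ) := by
  refine ⟨?_, ?_⟩
  · rintro _ ⟨x, hx, rfl⟩ _ ⟨y, hy, rfl⟩
    rw [← map_mul, ← map_mul, hH.1 x hx y hy]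
  · rintro _ ⟨x, hx, rfl⟩
    rw [← map_pow, hH.2 x hx, map_one]

theorem comap {H : Subgroup G'} (hH : IsElementaryAbelian p H) {φ : G →* G'}
    (hφ : Function.Injective φ) : IsElementaryAbelian p (H.comap φ) := by
  refine ⟨fun x hx y hy ↦ hφ ?_, fun x hx ↦ hφ ?_⟩
  · rw [map_mul, map_mul, hH.1 _ hx _ hy]
  · rw [map_pow, hH.2 _ hx, map_one]

theorem isPGroup {H : Subgroup G} (hH : IsElementaryAbelian p H) : IsPGroup p H :=
  fun x ↦ ⟨1, Subtype.ext (by simpa using hH.2 x x.2)⟩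

end IsElementaryAbelian

theorem Sylow.exists_isElementaryAbelian_card_eq {p : ℕ} [Fact p.Prime] {G : Type*} [Group G]
    [Finite G] {K : Subgroup G} (hK : IsElementaryAbelian p K) (P : Sylow p G) :
    ∃ H : Subgroup P, IsElementaryAbelian p H ∧ Nat.card H = Nat.card K := by
  obtain ⟨Q, hKQ⟩ := hK.isPGroup.exists_le_sylow
  refine ⟨(K.subgroupOf Q).map (Sylow.equiv Q P).toMonoidHom,
    (hK.comap Subtype.val_injective).map _, ?_⟩
  rw [Subgroup.card_map_of_injective (Sylow.equiv Q P).injective,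
    Nat.card_congr (Subgroup.subgroupOfEquivOfLe hKQ).toEquiv]

namespace Matrix.GeneralLinearGroup

variable {ι F : Type*} [Fintype ι] [DecidableEq ι] [Field F]

def diagonalSigns : (ι → ℤˣ) →* GeneralLinearGroup ι F :=
  (Units.map (diagonalRingHom ι F : (ι → F) →* Matrix ι ι F)).comp
    (MulEquiv.piUnits.symm.toMonoidHom.comp
      ((Units.map (Int.castRingHom F : ℤ →* F)).compLeft ι))

theorem val_diagonalSigns (η : ι → ℤˣ) :
    ((diagonalSigns η : GeneralLinearGroup ι F) : Matrix ι ι F) =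
      diagonal fun i ↦ ((η i : ℤ) : F) :=
  rfl

theorem diagonalSigns_injective (h2 : (2 : F) ≠ 0) :
    Function.Injective (diagonalSigns : (ι → ℤˣ) →* GeneralLinearGroup ι F) := by
  refine (injective_iff_map_eq_one _).2 fun η h ↦ funext fun i ↦ ?_
  have hi : ((η i : ℤ) : F) = 1 := by
    simpa [val_diagonalSigns] using
      congr_arg (fun g : GeneralLinearGroup ι F ↦ (g : Matrix ι ι F) i i) h
  rcases Int.units_eq_one_or (η i) with hη | hη
  · exact hη
  · rw [hη, Units.val_neg, Units.val_one, Int.cast_neg, Int.cast_one] at hi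
    exact absurd (by linear_combination -hi) h2

theorem isElementaryAbelian_range_diagonalSigns :
    IsElementaryAbelian 2 (diagonalSigns : (ι → ℤˣ) →* GeneralLinearGroup ι F).range := by
  rw [MonoidHom.range_eq_map]
  exact IsElementaryAbelian.map
    ⟨fun x _ y _ ↦ mul_comm x y, fun x _ ↦ funext fun i ↦ by simp [Int.units_sq]⟩ _

theorem card_le_two_pow_of_injective {G : Type*} [Group G] [Finite G]
    (h2 : (2 : F) ≠ 0) (hG : ∀ g : G, g ^ 2 = 1) {φ : G →* GeneralLinearGroup ι F}
    (hφ : Function.Injective φ) : Nat.card G ≤ 2 ^ Fintype.card ι := by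
  let ρ : Representation F G (ι → F) :=
    (toLinAlgEquiv' : Matrix ι ι F ≃ₐ[F] _).toRingEquiv.toMonoidHom.comp
      ((Units.coeHom _).comp φ)
  have hρ : ρ.ker = ⊥ := (MonoidHom.ker_eq_bot_iff ρ).2
    (toLinAlgEquiv'.injective.comp (Units.val_injective.comp hφ))
  simpa [hρ, Subgroup.index_bot] using ρ.index_ker_le_two_pow h2 hG

theorem card_range_diagonalSigns (h2 : (2 : F) ≠ 0) :
    Nat.card (diagonalSigns : (ι → ℤˣ) →* GeneralLinearGroup ι F).range =
      2 ^ Fintype.card ι := by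
  rw [MonoidHom.range_eq_map, Subgroup.card_map_of_injective (diagonalSigns_injective h2)]
  simp [Nat.card_eq_fintype_card, Fintype.card_units_int]

end Matrix.GeneralLinearGroup

theorem FiniteField.two_ne_zero_of_odd_card {F : Type*} [Field F] [Fintype F]
    (hF : Odd (Fintype.card F)) : (2 : F) ≠ 0 :=
  Ring.two_ne_zero fun h ↦ Nat.not_even_iff_odd.2 hF (Nat.even_iff.2 (even_card_iff_char_two.1 h))

open Matrix.GeneralLinearGroup in
theorem rank_GL_general (q n : ℕ) (F : Type*) [Field F] [Fintype F]
    (hc : Fintype.card F = q) (hq : Odd q)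
    (P : Sylow 2 (Matrix.GeneralLinearGroup (Fin n) F)) :
    pRank 2 ↥(P : Subgroup (Matrix.GeneralLinearGroup (Fin n) F)) = n := by
  have h2 : (2 : F) ≠ 0 := FiniteField.two_ne_zero_of_odd_card (hc ▸ hq)
  obtain ⟨D, hD, hDcard⟩ := P.exists_isElementaryAbelian_card_eq
    (isElementaryAbelian_range_diagonalSigns (ι := Fin n) (F := F))
  refine IsGreatest.csSup_eq ⟨⟨D, hD, ?_⟩, ?_⟩
  · rw [hDcard, card_range_diagonalSigns h2, Fintype.card_fin]
  · rintro m ⟨H, hH, hm⟩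
    have hle : Nat.card H ≤ 2 ^ Fintype.card (Fin n) :=
      card_le_two_pow_of_injective h2 (fun h ↦ Subtype.ext (hH.2 h h.2))
        (φ := P.toSubgroup.subtype.comp H.subtype)
        (P.toSubgroup.subtype_injective.comp H.subtype_injective)
    rwa [hm, Fintype.card_fin, Nat.pow_le_pow_iff_right (by norm_num)] at hle

/-- The 2-rank of `GL_n(F)` over a finite field `F` of odd order `q` equals `n`:
the 2-rank of every Sylow 2-subgroup of `GL_n(F)` is `n`. -/
theorem rank_GL (q n : ℕ) (hn : 1 ≤ n) (F : Type*) [Field F] [Fintype F]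
    (hc : Fintype.card F = q) (hq : Odd q) (hpp : IsPrimePow q)
    (P : Sylow 2 (Matrix.GeneralLinearGroup (Fin n) F)) :
    pRank 2 ↥(P : Subgroup (Matrix.GeneralLinearGroup (Fin n) F)) = n :=
  rank_GL_general q n F hc hq P
end

section
/- Let p be a prime and Q a finite group, and let W = Q ≀ ℤ/p be the wreath product, i.e. the semidirect product (Fin p → Q) ⋊ ℤ/p in which ℤ/p acts by cyclically shifting the coordinates. Let P denote the base subgroup (Fin p → Q) and let x denote the image in W of the generator 1 of ℤ/p (an element of order p). Then every element of order p in the coset xP is conjugate to x by an element of P. -/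
/-- The homomorphism `ℤ/n → G` sending `1` to an element `g` with `g ^ n = 1`. -/
noncomputable def zmodHom {G : Type*} [Group G] (n : ℕ) (g : G) (h : g ^ n = 1) :
    Multiplicative (ZMod n) →* G :=
  AddMonoidHom.toMultiplicativeLeft
    (ZMod.lift n ⟨zmultiplesHom (Additive G) (Additive.ofMul g), by
      show ((n : ℤ) • Additive.ofMul g) = 0
      rw [← ofMul_zpow, zpow_natCast, h, ofMul_one]⟩)

/-- The automorphism of `ι → Q` induced by a permutation of the index set `ι`. -/
def permMulAut {ι : Type*} {Q : Type*} [Group Q] (σ : Equiv.Perm ι) : MulAut (ι → Q) where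
  toFun f := f ∘ σ.symm
  invFun f := f ∘ σ
  left_inv f := by ext i; simp
  right_inv f := by ext i; simp
  map_mul' f g := rfl

/-- Permutations of the index set act on `ι → Q` by automorphisms. -/
def permHom (ι : Type*) (Q : Type*) [Group Q] : Equiv.Perm ι →* MulAut (ι → Q) where
  toFun := permMulAut
  map_one' := by ext f i; rfl
  map_mul' σ τ := by ext f i; rfl

open Fin.NatCast in
lemma finRotate_pow_self : ∀ p : ℕ, finRotate p ^ p = 1 := by
  intro p
  match p with
  | 0 => exact Subsingleton.elim _ _
  | (n+1) =>
    have key : ∀ k : ℕ, ∀ i : Fin (n+1), (finRotate (n+1) ^ k) i = i + (k : Fin (n+1)) := by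
      intro k
      induction k with
      | zero => intro i; simp
      | succ m ih =>
        intro i
        rw [pow_succ, Equiv.Perm.mul_apply, ih, finRotate_succ_apply]
        push_cast
        abel
    ext i
    rw [key (n+1) i]
    simp

/-- The action of `ℤ/p` on `Fin p → Q` by cyclically shifting the coordinates. -/
noncomputable def rotHom (p : ℕ) (Q : Type*) [Group Q] :
    Multiplicative (ZMod p) →* MulAut (Fin p → Q) :=
  zmodHom p (permHom (Fin p) Q (finRotate p))
    (by rw [← map_pow, finRotate_pow_self, map_one])

/-- The wreath product `Q ≀ ℤ/p = (Fin p → Q) ⋊ ℤ/p`, where `ℤ/p` acts by cyclically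
shifting the coordinates. -/
noncomputable def WreathCyc (p : ℕ) (Q : Type*) [Group Q] :=
  (Fin p → Q) ⋊[rotHom p Q] Multiplicative (ZMod p)

noncomputable instance (p : ℕ) (Q : Type*) [Group Q] : Group (WreathCyc p Q) :=
  inferInstanceAs (Group ((Fin p → Q) ⋊[rotHom p Q] Multiplicative (ZMod p)))

/-- The base subgroup `Q^p` of the wreath product `Q ≀ ℤ/p`. -/
noncomputable def wreathBase (p : ℕ) (Q : Type*) [Group Q] : Subgroup (WreathCyc p Q) :=
  (SemidirectProduct.inl : (Fin p → Q) →* (Fin p → Q) ⋊[rotHom p Q] Multiplicative (ZMod p)).range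

/-- The image in `Q ≀ ℤ/p` of the generator `1` of `ℤ/p`. -/
noncomputable def wreathGen (p : ℕ) (Q : Type*) [Group Q] : WreathCyc p Q :=
  (SemidirectProduct.inr : Multiplicative (ZMod p) →* (Fin p → Q) ⋊[rotHom p Q] Multiplicative (ZMod p))
    (Multiplicative.ofAdd (1 : ZMod p))

/-!
Write `w = (c, x)` with `c : Fin p → Q`. Conjugating `x` by `d ∈ P` gives `(d · x(d)⁻¹, x)`, so we
need `c i = d i * (d (i - 1))⁻¹`. The coordinate `0` of `w ^ m` satisfies the recursion
`(w ^ (m + 1)) 0 = (w ^ m) 0 * c (-m)`, so `d i := ((w ^ m) 0)⁻¹` with `m ≡ -i` solves it; the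
choice of representative `m` does not matter because `w ^ p = 1`.
-/

lemma zmodHom_ofAdd_one {G : Type*} [Group G] (n : ℕ) (g : G) (h : g ^ n = 1) :
    zmodHom n g h (Multiplicative.ofAdd 1) = g := by
  have h1 : (1 : ZMod n) = ((1 : ℤ) : ZMod n) := Int.cast_one.symm
  simp only [zmodHom, AddMonoidHom.coe_toMultiplicativeLeft, Function.comp_apply, toAdd_ofAdd,
    h1, ZMod.lift_coe]
  simp

namespace SemidirectProduct

variable {N G : Type*} [Group N] [Group G] {φ : G →* MulAut N}

theorem right_pow (w : N ⋊[φ] G) (m : ℕ) : (w ^ m).right = w.right ^ m :=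
  map_pow rightHom w m

theorem left_pow_succ (w : N ⋊[φ] G) (m : ℕ) :
    (w ^ (m + 1)).left = (w ^ m).left * φ (w.right ^ m) w.left := by
  rw [pow_succ, mul_left, right_pow]

theorem inl_mul_inr_mul_inl_inv (d : N) (g : G) :
    (inl d * inr g * inl d⁻¹ : N ⋊[φ] G) = ⟨d * φ g d⁻¹, g⟩ := by
  ext <;> simp

end SemidirectProduct

open Fin.NatCast Fin.CommRing

lemma finRotate_pow_apply (n : ℕ) [NeZero n] (m : ℕ) (i : Fin n) :
    (finRotate n ^ m) i = i + m := by
  induction m with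
  | zero => simp
  | succ m ih => rw [pow_succ', Equiv.Perm.mul_apply, ih, finRotate_apply]; push_cast; ring

lemma rotHom_ofAdd_one_pow_apply (n : ℕ) [NeZero n] (Q : Type*) [Group Q] (m : ℕ)
    (f : Fin n → Q) (i : Fin n) :
    rotHom n Q (Multiplicative.ofAdd 1 ^ m) f i = f (i - m) := by
  rw [map_pow, rotHom, zmodHom_ofAdd_one, ← map_pow]
  show f ((finRotate n ^ m).symm i) = f (i - m)
  congr 1
  rw [Equiv.symm_apply_eq, finRotate_pow_apply, sub_add_cancel]

open SemidirectProduct in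
theorem exists_inl_conj_inr_eq_of_pow_eq_one (n : ℕ) {Q : Type*} [Group Q]
    (w : (Fin n → Q) ⋊[rotHom n Q] Multiplicative (ZMod n))
    (hright : w.right = Multiplicative.ofAdd 1) (hw : w ^ n = 1) :
    ∃ d : Fin n → Q, inl d * inr (Multiplicative.ofAdd 1) * (inl d)⁻¹ = w := by
  rcases eq_zero_or_neZero n with rfl | _
  · exact ⟨1, by ext i; exacts [i.elim0, by simp [hright]]⟩
  set L : ℕ → Q := fun m => (w ^ m).left 0
  have hL_mod (m : ℕ) : L (m % n) = L m := by simp only [L, ← pow_eq_pow_mod m hw]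
  have hL_succ (m : ℕ) : L (m + 1) = L m * w.left (-m) := by
    simp only [L, left_pow_succ, hright, Pi.mul_apply, rotHom_ofAdd_one_pow_apply, zero_sub]
  refine ⟨fun i => (L (-i).val)⁻¹, ?_⟩
  rw [← map_inv, inl_mul_inr_mul_inl_inv]
  ext i
  · have hrot := rotHom_ofAdd_one_pow_apply n Q 1 (fun i => (L (-i).val)⁻¹)⁻¹ i
    have hidx : -(i - 1) = (((-i).val + 1 : ℕ) : Fin n) := by push_cast; ring
    rw [pow_one, Nat.cast_one] at hrot
    simp only [Pi.mul_apply, hrot, Pi.inv_apply, inv_inv]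
    rw [hidx, Fin.val_natCast, hL_mod, hL_succ, Fin.cast_val_eq_self, neg_neg, inv_mul_cancel_left]
  · exact hright.symm

theorem orderp_in_coset_conj_general (p : ℕ) (Q : Type*) [Group Q]
    (w : WreathCyc p Q) (hw : ∃ a ∈ wreathBase p Q, w = wreathGen p Q * a)
    (hord : orderOf w = p) :
    ∃ g ∈ wreathBase p Q, g * wreathGen p Q * g⁻¹ = w := by
  obtain ⟨_, ⟨b, rfl⟩, rfl⟩ := hw
  obtain ⟨d, hd⟩ := exists_inl_conj_inr_eq_of_pow_eq_one p _
    (mul_one _) (hord ▸ pow_orderOf_eq_one _)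
  exact ⟨_, ⟨d, rfl⟩, hd⟩

/-- In the wreath product `W = Q ≀ ℤ/p` (`p` prime, `Q` finite), with base subgroup
`P = Q^p` and `x` the image of the generator of `ℤ/p`, every element of order `p` in the
coset `xP` is conjugate to `x` by an element of `P`. -/
theorem orderp_in_coset_conj (p : ℕ) (hp : p.Prime) (Q : Type*) [Group Q] [Finite Q]
    (w : WreathCyc p Q) (hw : ∃ a ∈ wreathBase p Q, w = wreathGen p Q * a)
    (hord : orderOf w = p) :
    ∃ g ∈ wreathBase p Q, g * wreathGen p Q * g⁻¹ = w :=
  orderp_in_coset_conj_general p Q w hw hord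
end
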